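/- Let r > 0 and n ≥ 1. Let Z be a compact (r,n)-stacked space over X_1,…,X_n with distinguished points p¹, p⁻¹, and W a compact (r,n)-stacked space over Y_1,…,Y_n with distinguished points q¹, q⁻¹, where all X_k and Y_k are nonempty compact metric spaces of diameter at most r. Let R be a correspondence between Z and W with distortion dis(R) < 2r. Then R[{p¹}] and R[{p⁻¹}] are singletons contained in {q¹, q⁻¹}, R⁻¹[{q¹}] and R⁻¹[{q⁻¹}] are singletons contained in {p¹, p⁻¹}, the unique points R(p¹) and R(p⁻¹) are distinct, the unique points R⁻¹(q¹) and R⁻¹(q⁻¹) are distinct, and the induced maps {p¹,p⁻¹} → {q¹,q⁻¹} and {q¹,q⁻¹} → {p¹,p⁻¹} are mutually inverse bijections. -/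
import Mathlib


open GromovHausdorff

universe u v w

/-- `Z` (with two distinguished points `p true = p¹` and `p false = p⁻¹`, and pieces
`P 0, …, P (n-1)`, where `P k` plays the role of `Z_{k+1}`) is an `(r,n)`-stacked space
over the nonempty compact metric spaces `X 0, …, X (n-1)` (each of diameter at most `r`):
* `dist p¹ p⁻¹ = 3r`;
* the pieces are pairwise disjoint and do not contain `p¹`, `p⁻¹`;
* `{p¹, p⁻¹}` together with the pieces cover `Z`;
* the piece `P k` with the induced metric is isometric to `X k`;
* `dist (p^s) z = 5r(k+1)` for every `z ∈ P k` and both `s`;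
* `dist z w = 5r|k - l|` for `z ∈ P k`, `w ∈ P l` with `k ≠ l`. -/
def IsStackedSpace (r : ℝ) {n : ℕ} (X : Fin n → Type u) [∀ k, MetricSpace (X k)]
    (Z : Type v) [MetricSpace Z] (p : Bool → Z) (P : Fin n → Set Z) : Prop :=
  dist (p true) (p false) = 3 * r ∧
  (Pairwise fun k l : Fin n => Disjoint (P k) (P l)) ∧
  (∀ (k : Fin n) (s : Bool), p s ∉ P k) ∧
  ({p true, p false} ∪ ⋃ k, P k) = Set.univ ∧
  (∀ k : Fin n, Nonempty (X k ≃ᵢ (P k : Set Z))) ∧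
  (∀ (k : Fin n) (s : Bool), ∀ z ∈ P k, dist (p s) z = 5 * r * ((k : ℕ) + 1)) ∧
  (∀ k l : Fin n, k ≠ l → ∀ z ∈ P k, ∀ w ∈ P l,
    dist z w = 5 * r * |((k : ℕ) : ℝ) - ((l : ℕ) : ℝ)|)

/-- `R ⊆ Z × W` is a correspondence: both projections are surjective onto `Z` and `W`. -/
def IsCorrespondence {Z : Type v} {W : Type w} (R : Set (Z × W)) : Prop :=
  (∀ z : Z, ∃ w : W, (z, w) ∈ R) ∧ (∀ w : W, ∃ z : Z, (z, w) ∈ R)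

/-- The distortion of a relation `R ⊆ Z × W`:
`dis R = sup {|d_Z(x, ξ) - d_W(y, η)| : (x, y), (ξ, η) ∈ R}`. -/
noncomputable def distortion {Z : Type v} {W : Type w} [MetricSpace Z] [MetricSpace W]
    (R : Set (Z × W)) : ℝ :=
  sSup {t : ℝ | ∃ a ∈ R, ∃ b ∈ R, t = |dist a.1 b.1 - dist a.2 b.2|}

section AuxLemmas

universe u₁ u₂ v₁ v₂

lemma stacked_piece_dist_le {n : ℕ} {r : ℝ} {X : Fin n → Type u₁}
    [∀ k, MetricSpace (X k)] [∀ k, CompactSpace (X k)]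
    (hdX : ∀ k, Metric.diam (Set.univ : Set (X k)) ≤ r)
    {Z : Type v₁} [MetricSpace Z] {p : Bool → Z} {P : Fin n → Set Z}
    (hZ : IsStackedSpace r X Z p P) {k : Fin n} {z w : Z}
    (hz : z ∈ P k) (hw : w ∈ P k) : dist z w ≤ r := by
  obtain ⟨e⟩ := hZ.2.2.2.2.1 k
  have h1 : dist z w = dist (e.symm ⟨z, hz⟩) (e.symm ⟨w, hw⟩) := by
    rw [e.symm.dist_eq]
    exact (Subtype.dist_eq ⟨z, hz⟩ ⟨w, hw⟩).symm
  rw [h1]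
  calc dist (e.symm ⟨z, hz⟩) (e.symm ⟨w, hw⟩)
      ≤ Metric.diam (Set.univ : Set (X k)) :=
        Metric.dist_le_diam_of_mem isCompact_univ.isBounded trivial trivial
    _ ≤ r := hdX k

lemma stacked_mem_image {n : ℕ} {r : ℝ} (hr : 0 < r)
    {X : Fin n → Type u₁} [∀ k, MetricSpace (X k)] [∀ k, CompactSpace (X k)]
    {Y : Fin n → Type u₂} [∀ k, MetricSpace (Y k)]
    (hdX : ∀ k, Metric.diam (Set.univ : Set (X k)) ≤ r)
    {Z : Type v₁} [MetricSpace Z] {W : Type v₂} [MetricSpace W]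
    {p : Bool → Z} {P : Fin n → Set Z} (hZ : IsStackedSpace r X Z p P)
    {q : Bool → W} {Q : Fin n → Set W} (hW : IsStackedSpace r Y W q Q)
    {R : Set (Z × W)} (hRr : ∀ w : W, ∃ z : Z, (z, w) ∈ R)
    (hb : ∀ a ∈ R, ∀ b ∈ R, |dist a.1 b.1 - dist a.2 b.2| < 2 * r) :
    ∀ (s : Bool) (w : W), (p s, w) ∈ R → w = q true ∨ w = q false := by
  intro s w hw
  by_contra hcon
  push_neg at hcon
  have hwu : w ∈ ({q true, q false} ∪ ⋃ k, Q k : Set W) := by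
    rw [hW.2.2.2.1]; trivial
  rcases hwu with hin | hin
  · rcases hin with h | h
    · exact hcon.1 h
    · exact hcon.2 h
  obtain ⟨k, hk⟩ := Set.mem_iUnion.mp hin
  have hple : ∀ a b : Bool, dist (p a) (p b) ≤ 3 * r := by
    intro a b
    cases a <;> cases b
    · rw [dist_self]; linarith
    · rw [dist_comm, hZ.1]
    · rw [hZ.1]
    · rw [dist_self]; linarith
  have key : ∀ (t : Bool) (z : Z), (z, q t) ∈ R → z ∈ P k := by
    intro t z hz
    have hd : |dist (p s) z - dist w (q t)| < 2 * r := hb (p s, w) hw (z, q t) hz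
    have hqt : dist w (q t) = 5 * r * ((k : ℕ) + 1) := by
      rw [dist_comm]; exact hW.2.2.2.2.2.1 k t w hk
    rw [hqt] at hd
    have hk0 : (0 : ℝ) ≤ ((k : ℕ) : ℝ) := Nat.cast_nonneg _
    have hexp : 5 * r * (((k : ℕ) : ℝ) + 1) = 5 * r * ((k : ℕ) : ℝ) + 5 * r := by ring
    have hk5 : 0 ≤ 5 * r * ((k : ℕ) : ℝ) := by positivity
    have habs := abs_lt.mp hd
    have hgt : dist (p s) z > 3 * r := by linarith
    have hzu : z ∈ ({p true, p false} ∪ ⋃ j, P j : Set Z) := by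
      rw [hZ.2.2.2.1]; trivial
    rcases hzu with hin' | hin'
    · rcases hin' with h | h
      · exact absurd (h ▸ hple s true) (by linarith)
      · exact absurd (h ▸ hple s false) (by linarith)
    obtain ⟨j, hj⟩ := Set.mem_iUnion.mp hin'
    have hpj : dist (p s) z = 5 * r * ((j : ℕ) + 1) := hZ.2.2.2.2.2.1 j s z hj
    rw [hpj] at hd habs
    have hjk : j = k := by
      by_contra hne
      have hne' : (j : ℕ) ≠ (k : ℕ) := fun h => hne (Fin.val_injective h)
      have h1 : (1 : ℝ) ≤ |((j : ℕ) : ℝ) - ((k : ℕ) : ℝ)| := by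
        rcases hne'.lt_or_gt with h | h
        · rw [abs_sub_comm, abs_of_pos (sub_pos.mpr (by exact_mod_cast h))]
          have : ((j : ℕ) : ℝ) + 1 ≤ ((k : ℕ) : ℝ) := by exact_mod_cast h
          linarith
        · rw [abs_of_pos (sub_pos.mpr (by exact_mod_cast h))]
          have : ((k : ℕ) : ℝ) + 1 ≤ ((j : ℕ) : ℝ) := by exact_mod_cast h
          linarith
      have habs2 : |5 * r * (((j : ℕ) : ℝ) + 1) - 5 * r * (((k : ℕ) : ℝ) + 1)|
          = 5 * r * |((j : ℕ) : ℝ) - ((k : ℕ) : ℝ)| := by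
        rw [show 5 * r * (((j : ℕ) : ℝ) + 1) - 5 * r * (((k : ℕ) : ℝ) + 1)
            = (5 * r) * (((j : ℕ) : ℝ) - ((k : ℕ) : ℝ)) by ring, abs_mul,
          abs_of_pos (by linarith : (0 : ℝ) < 5 * r)]
      rw [habs2] at hd
      nlinarith
    exact hjk ▸ hj
  obtain ⟨zt, hzt⟩ := hRr (q true)
  obtain ⟨zf, hzf⟩ := hRr (q false)
  have h1 : zt ∈ P k := key true zt hzt
  have h2 : zf ∈ P k := key false zf hzf
  have hle : dist zt zf ≤ r := stacked_piece_dist_le hdX hZ h1 h2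
  have hd : |dist zt zf - dist (q true) (q false)| < 2 * r := hb (zt, q true) hzt (zf, q false) hzf
  rw [hW.1] at hd
  have := abs_lt.mp hd
  linarith

end AuxLemmas

/-- Let `Z`, `W` be compact `(r,n)`-stacked spaces over the `X k` and
`Y k` respectively, with distinguished points `p¹ = p true, p⁻¹ = p false` and
`q¹ = q true, q⁻¹ = q false`, and let `R` be a correspondence between `Z` and `W` with
`dis R < 2r`. Then the images `R[{p^s}]` are singletons contained in `{q¹, q⁻¹}`,
the preimages `R⁻¹[{q^s}]` are singletons contained in `{p¹, p⁻¹}`, the two image points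
are distinct, the two preimage points are distinct, and the induced maps
`{p¹,p⁻¹} → {q¹,q⁻¹}` and `{q¹,q⁻¹} → {p¹,p⁻¹}` are mutually inverse bijections. -/
theorem stackedSpace_corr_basepoints (r : ℝ) (hr : 0 < r) (n : ℕ) (hn : 1 ≤ n)
    (X Y : Fin n → Type u)
    [∀ k, MetricSpace (X k)] [∀ k, CompactSpace (X k)] [∀ k, Nonempty (X k)]
    [∀ k, MetricSpace (Y k)] [∀ k, CompactSpace (Y k)] [∀ k, Nonempty (Y k)]
    (hdX : ∀ k, Metric.diam (Set.univ : Set (X k)) ≤ r)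
    (hdY : ∀ k, Metric.diam (Set.univ : Set (Y k)) ≤ r)
    (Z : Type v) [MetricSpace Z] [CompactSpace Z]
    (W : Type w) [MetricSpace W] [CompactSpace W]
    (p : Bool → Z) (P : Fin n → Set Z) (hZ : IsStackedSpace r X Z p P)
    (q : Bool → W) (Q : Fin n → Set W) (hW : IsStackedSpace r Y W q Q)
    (R : Set (Z × W)) (hR : IsCorrespondence R) (hdis : distortion R < 2 * r) :
    ∃ f g : Bool → Bool,
      (∀ s : Bool, {w : W | (p s, w) ∈ R} = {q (f s)}) ∧
      (∀ s : Bool, {z : Z | (z, q s) ∈ R} = {p (g s)}) ∧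
      q (f true) ≠ q (f false) ∧
      p (g true) ≠ p (g false) ∧
      (∀ s : Bool, g (f s) = s) ∧ (∀ s : Bool, f (g s) = s) := by
  classical
  obtain ⟨hRl, hRr⟩ := hR
  -- the distortion bound for individual pairs
  have hbdd : BddAbove {t : ℝ | ∃ a ∈ R, ∃ b ∈ R, t = |dist a.1 b.1 - dist a.2 b.2|} := by
    refine ⟨Metric.diam (Set.univ : Set Z) + Metric.diam (Set.univ : Set W), ?_⟩
    rintro t ⟨a, ha, b, hbm, rfl⟩
    have h1 : dist a.1 b.1 ≤ Metric.diam (Set.univ : Set Z) :=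
      Metric.dist_le_diam_of_mem isCompact_univ.isBounded trivial trivial
    have h2 : dist a.2 b.2 ≤ Metric.diam (Set.univ : Set W) :=
      Metric.dist_le_diam_of_mem isCompact_univ.isBounded trivial trivial
    rw [abs_sub_le_iff]
    constructor <;>
      linarith [dist_nonneg (x := a.1) (y := b.1), dist_nonneg (x := a.2) (y := b.2)]
  have hb : ∀ a ∈ R, ∀ b ∈ R, |dist a.1 b.1 - dist a.2 b.2| < 2 * r := fun a ha b hbm =>
    lt_of_le_of_lt (le_csSup hbdd ⟨a, ha, b, hbm, rfl⟩) hdis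
  -- the swapped relation
  set R' : Set (W × Z) := {x | (x.2, x.1) ∈ R} with hR'
  have hb' : ∀ a ∈ R', ∀ b ∈ R', |dist a.1 b.1 - dist a.2 b.2| < 2 * r := by
    intro a ha b hbm
    rw [abs_sub_comm]
    exact hb (a.2, a.1) ha (b.2, b.1) hbm
  have hR'r : ∀ z : Z, ∃ w : W, (w, z) ∈ R' := fun z => hRl z
  have himg : ∀ (s : Bool) (w : W), (p s, w) ∈ R → w = q true ∨ w = q false :=
    stacked_mem_image hr hdX hZ hW hRr hb
  have hpre : ∀ (s : Bool) (z : Z), (z, q s) ∈ R → z = p true ∨ z = p false := by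
    intro s z hz
    exact stacked_mem_image hr hdY hW hZ hR'r hb' s z hz
  -- injectivity of p and q
  have hpne : p true ≠ p false := by
    intro h
    have h0 := hZ.1
    rw [h, dist_self] at h0
    linarith
  have hqne : q true ≠ q false := by
    intro h
    have h0 := hW.1
    rw [h, dist_self] at h0
    linarith
  have pinj : ∀ a b : Bool, p a = p b → a = b := by
    intro a b h
    cases a <;> cases b
    · rfl
    · exact absurd h.symm hpne
    · exact absurd h hpne
    · rfl
  have qinj : ∀ a b : Bool, q a = q b → a = b := by
    intro a b h
    cases a <;> cases b
    · rfl
    · exact absurd h.symm hqne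
    · exact absurd h hqne
    · rfl
  -- uniqueness of images and preimages
  have huniq : ∀ (s : Bool) (w w' : W), (p s, w) ∈ R → (p s, w') ∈ R → w = w' := by
    intro s w w' hw hw'
    by_contra hne
    have hd : |dist (p s) (p s) - dist w w'| < 2 * r := hb (p s, w) hw (p s, w') hw'
    rw [dist_self, zero_sub, abs_neg, abs_of_nonneg dist_nonneg] at hd
    have h3 : dist w w' = 3 * r := by
      rcases himg s w hw with rfl | rfl <;> rcases himg s w' hw' with rfl | rfl
      · exact absurd rfl hne
      · exact hW.1
      · rw [dist_comm]; exact hW.1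
      · exact absurd rfl hne
    rw [h3] at hd
    linarith
  have huniq' : ∀ (s : Bool) (z z' : Z), (z, q s) ∈ R → (z', q s) ∈ R → z = z' := by
    intro s z z' hz hz'
    by_contra hne
    have hd : |dist z z' - dist (q s) (q s)| < 2 * r := hb (z, q s) hz (z', q s) hz'
    rw [dist_self, sub_zero, abs_of_nonneg dist_nonneg] at hd
    have h3 : dist z z' = 3 * r := by
      rcases hpre s z hz with rfl | rfl <;> rcases hpre s z' hz' with rfl | rfl
      · exact absurd rfl hne
      · exact hZ.1
      · rw [dist_comm]; exact hZ.1
      · exact absurd rfl hne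
    rw [h3] at hd
    linarith
  -- define f and g
  have hex : ∀ s : Bool, ∃ t : Bool, (p s, q t) ∈ R := by
    intro s
    obtain ⟨w, hw⟩ := hRl (p s)
    rcases himg s w hw with rfl | rfl
    · exact ⟨true, hw⟩
    · exact ⟨false, hw⟩
  have hex' : ∀ s : Bool, ∃ t : Bool, (p t, q s) ∈ R := by
    intro s
    obtain ⟨z, hz⟩ := hRr (q s)
    rcases hpre s z hz with rfl | rfl
    · exact ⟨true, hz⟩
    · exact ⟨false, hz⟩
  choose f hf using hex
  choose g hg using hex'
  refine ⟨f, g, ?_, ?_, ?_, ?_, ?_, ?_⟩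
  · intro s
    ext w
    simp only [Set.mem_setOf_eq, Set.mem_singleton_iff]
    exact ⟨fun h => huniq s w _ h (hf s), fun h => h ▸ hf s⟩
  · intro s
    ext z
    simp only [Set.mem_setOf_eq, Set.mem_singleton_iff]
    exact ⟨fun h => huniq' s z _ h (hg s), fun h => h ▸ hg s⟩
  · intro h
    have h1 := hf true
    have h2 := hf false
    rw [← h] at h2
    have hd : |dist (p true) (p false) - dist (q (f true)) (q (f true))| < 2 * r :=
      hb (p true, q (f true)) h1 (p false, q (f true)) h2
    rw [dist_self, sub_zero, hZ.1, abs_of_nonneg (by linarith : (0:ℝ) ≤ 3 * r)] at hd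
    linarith
  · intro h
    have h1 := hg true
    have h2 := hg false
    rw [← h] at h2
    have hd : |dist (p (g true)) (p (g true)) - dist (q true) (q false)| < 2 * r :=
      hb (p (g true), q true) h1 (p (g true), q false) h2
    rw [dist_self, zero_sub, abs_neg, hW.1,
      abs_of_nonneg (by linarith : (0:ℝ) ≤ 3 * r)] at hd
    linarith
  · intro s
    exact pinj _ _ (huniq' (f s) (p (g (f s))) (p s) (hg (f s)) (hf s))
  · intro s
    exact qinj _ _ (huniq (g s) (q (f (g s))) (q s) (hf (g s)) (hg s))
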